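/- arXiv:1205.0522 — 5 statements merged into one kernel-verified Lean document; each statement's English description precedes it below -/
import Mathlib

section
/- If H is a set that is both a circuit and a hyperplane of a matroid M, then the collection consisting of the bases of M together with H forms the set of bases of a matroid on E(M). -/
set_option autoImplicit false

open Set

universe u v

namespace NearlyBinary

variable {α : Type u} {β : Type v}

/-- `C` is a circuit of `M`: a minimal dependent set. -/
def Circuit (M : Matroid α) (C : Set α) : Prop :=
  M.Dep C ∧ ∀ e ∈ C, M.Indep (C \ {e})

/-- `H` is a hyperplane of `M`: a maximal proper flat. -/
def Hyperplane (M : Matroid α) (H : Set α) : Prop :=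
  M.IsFlat H ∧ H ≠ M.E ∧ ∀ F, M.IsFlat F → H ⊂ F → F = M.E

/-- `H` is a circuit-hyperplane of `M`. -/
def CircuitHyperplane (M : Matroid α) (H : Set α) : Prop :=
  Circuit M H ∧ Hyperplane M H

/-- `M'` is the relaxation of `M` along `H` : same ground set, and the bases of `M'`
are the bases of `M` together with `H`. -/
def IsRelaxation (M : Matroid α) (H : Set α) (M' : Matroid α) : Prop :=
  M'.E = M.E ∧ ∀ B, M'.IsBase B ↔ (M.IsBase B ∨ B = H)

/-- Deletion of the set `D` from `M`. -/
def del (M : Matroid α) (D : Set α) : Matroid α := M.restrict (M.E \ D)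

/-- Contraction of the set `C` in `M`. -/
def con (M : Matroid α) (C : Set α) : Matroid α := ((M✶).restrict (M.E \ C))✶

/-- `N` is a minor of `M` (on the same type), obtained by a contraction and a deletion. -/
def IsMinorOf (N M : Matroid α) : Prop :=
  ∃ C D, C ⊆ M.E ∧ D ⊆ M.E ∧ Disjoint C D ∧ N = del (con M C) D

/-- `M` is binary: representable over `GF(2)`. -/
def IsBinary (M : Matroid α) : Prop :=
  ∃ (ι : Type u) (φ : α → ι → ZMod 2),
    ∀ I, I ⊆ M.E → (M.Indep I ↔ LinearIndependent (ZMod 2) (fun x : I => φ x.1))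

def IsLoop (M : Matroid α) (e : α) : Prop := e ∈ M.E ∧ ¬ M.Indep {e}

def IsColoop (M : Matroid α) (e : α) : Prop := e ∈ M.E ∧ ∀ B, M.IsBase B → e ∈ B

/-- `x` and `y` are parallel: distinct elements forming a two-element circuit. -/
def Parallel (M : Matroid α) (x y : α) : Prop := x ≠ y ∧ Circuit M {x, y}

/-- A separator of `M`: a set such that every circuit lies inside it or inside its complement. -/
def Separator (M : Matroid α) (S : Set α) : Prop :=
  S ⊆ M.E ∧ ∀ C, Circuit M C → C ⊆ S ∨ C ⊆ M.E \ S

/-- `M` is disconnected: its ground set is partitioned into two nonempty separators. -/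
def Disconnected (M : Matroid α) : Prop :=
  ∃ S, Separator M S ∧ S.Nonempty ∧ (M.E \ S).Nonempty

/-- `M` is connected (2-connected). -/
def Connected (M : Matroid α) : Prop := ¬ Disconnected M

/-- The rank (in `ℕ∞`) of a set `X` in `M`. -/
noncomputable def eRk (M : Matroid α) (X : Set α) : ℕ∞ :=
  ⨆ I ∈ {I | M.Indep I ∧ I ⊆ X}, I.encard

/-- `M` has a (Tutte) `k`-separation. -/
def HasSep (M : Matroid α) (k : ℕ) : Prop :=
  ∃ X, X ⊆ M.E ∧ (k : ℕ∞) ≤ X.encard ∧ (k : ℕ∞) ≤ (M.E \ X).encard ∧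
    eRk M X + eRk M (M.E \ X) ≤ eRk M M.E + ((k : ℕ∞) - 1)

/-- `M` is `n`-connected in the sense of Tutte. -/
def TutteConnected (n : ℕ) (M : Matroid α) : Prop :=
  ∀ k, 1 ≤ k → k < n → ¬ HasSep M k

/-- `M` is isomorphic to the uniform matroid `U_{r,m}`. -/
def IsUniform (M : Matroid α) (r m : ℕ) : Prop :=
  M.E.encard = m ∧ ∀ B, M.IsBase B ↔ (B ⊆ M.E ∧ B.encard = r)

/-- `M` is isomorphic to the direct sum `U_{n-1,n} ⊕ U_{1,k}`. -/
def IsUnifSumUnif (M : Matroid α) (n k : ℕ) : Prop :=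
  ∃ S P : Set α, Disjoint S P ∧ S ∪ P = M.E ∧ S.encard = n ∧ P.encard = k ∧
    ∀ B, M.IsBase B ↔ ∃ s ∈ S, ∃ p ∈ P, B = (S \ {s}) ∪ {p}

/-- `M` is the 2-sum of `M₁` and `M₂` with basepoint `p`, described by its circuits. -/
def IsTwoSum (M₁ M₂ : Matroid α) (p : α) (M : Matroid α) : Prop :=
  M₁.E ∩ M₂.E = {p} ∧
  ¬ IsLoop M₁ p ∧ ¬ IsColoop M₁ p ∧ ¬ IsLoop M₂ p ∧ ¬ IsColoop M₂ p ∧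
  M.E = (M₁.E ∪ M₂.E) \ {p} ∧
  ∀ C, Circuit M C ↔
    ((Circuit M₁ C ∧ p ∉ C) ∨ (Circuit M₂ C ∧ p ∉ C) ∨
      ∃ C₁ C₂, Circuit M₁ C₁ ∧ Circuit M₂ C₂ ∧ p ∈ C₁ ∧ p ∈ C₂ ∧
        C = (C₁ \ {p}) ∪ (C₂ \ {p}))

/-- `M` is isomorphic to `N`. -/
def Iso (M : Matroid β) (N : Matroid α) : Prop :=
  ∃ f : β → α, Set.BijOn f M.E N.E ∧ ∀ I, I ⊆ M.E → (M.Indep I ↔ N.Indep (f '' I))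

/-- `M` is the vector matroid, with ground set `G`, of the vectors `φ` over `GF(2)`. -/
def IsVecMatroid {ι : Type v} (M : Matroid α) (φ : α → ι → ZMod 2) (G : Set α) : Prop :=
  M.E = G ∧ ∀ I, I ⊆ G → (M.Indep I ↔ LinearIndependent (ZMod 2) (fun x : I => φ x.1))


section Relax

variable {α : Type u} {M : Matroid α} {H : Set α}

lemma CH_subset_ground (hH : CircuitHyperplane M H) : H ⊆ M.E :=
  hH.1.1.subset_ground

lemma flat_closure (M : Matroid α) (X : Set α) : M.IsFlat (M.closure X) := by
  rw [Matroid.closure_def, sInter_eq_iInter]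
  have hne : Nonempty ↑{F | M.IsFlat F ∧ X ∩ M.E ⊆ F} :=
    ⟨⟨M.E, M.ground_isFlat, inter_subset_right⟩⟩
  exact Matroid.IsFlat.iInter (fun F => F.2.1)

lemma CH_not_indep (hH : CircuitHyperplane M H) : ¬ M.Indep H :=
  hH.1.1.not_indep

lemma CH_closure_diff (hH : CircuitHyperplane M H) {e : α} (he : e ∈ H) :
    M.closure (H \ {e}) = H := by
  have hIi : M.Indep (H \ {e}) := hH.1.2 e he
  have heH : e ∈ M.closure (H \ {e}) := by
    have : M.Dep (insert e (H \ {e})) := by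
      rw [insert_diff_singleton, insert_eq_of_mem he]
      exact hH.1.1
    rw [hIi.insert_dep_iff] at this
    exact this.1
  apply subset_antisymm
  · have := M.closure_subset_closure (diff_subset (s := H) (t := {e}))
    rwa [hH.2.1.closure] at this
  · intro x hx
    rcases eq_or_ne x e with rfl | hxe
    · exact heH
    · exact M.subset_closure (H \ {e}) (diff_subset.trans (CH_subset_ground hH))
        ⟨hx, hxe⟩

/-- Swapping an element of `H` for one outside `H` gives a base of `M`. -/
lemma CH_swap_base (hH : CircuitHyperplane M H) {e f : α} (he : e ∈ H)
    (hf : f ∈ M.E \ H) : M.IsBase (insert f (H \ {e})) := by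
  have hIi : M.Indep (H \ {e}) := hH.1.2 e he
  have hcl := CH_closure_diff hH he
  have hfI : f ∉ H \ {e} := fun h => hf.2 h.1
  have hins : M.Indep (insert f (H \ {e})) := by
    rw [Matroid.insert_indep_iff]
    exact ⟨hIi, fun _ => ⟨hf.1, by rw [hcl]; exact hf.2⟩⟩
  refine hins.isBase_of_ground_subset_closure ?_
  have hflat : M.IsFlat (M.closure (insert f (H \ {e}))) := flat_closure M _
  have hsub : H ⊂ M.closure (insert f (H \ {e})) := by
    constructor
    · have h' := M.closure_subset_closure (subset_insert f (H \ {e}))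
      rw [hcl] at h'
      exact h'
    · intro hle
      exact hf.2 (hle (M.mem_closure_of_mem (mem_insert f _)
        (insert_subset hf.1 (diff_subset.trans (CH_subset_ground hH)))))
  exact (hH.2.2.2 _ hflat hsub).symm.subset

lemma CH_base_not_subset (hH : CircuitHyperplane M H) {B : Set α} (hB : M.IsBase B) :
    ¬ B ⊆ H := by
  intro hBH
  have : M.E ⊆ H := by
    have := M.closure_subset_closure hBH
    rwa [hB.closure_eq, hH.2.1.closure] at this
  exact hH.2.2.1 (subset_antisymm (CH_subset_ground hH) this)

lemma CH_exists_mem_diff (hH : CircuitHyperplane M H) {B : Set α} (hB : M.IsBase B) :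
    ¬ H ⊆ B := fun h => CH_not_indep hH (hB.indep.subset h)

/-- If `I` is independent with `H ⊆ M.closure I` and `M.closure I = H` fails appropriately;
here: if `I` is independent, `I ⊆ H` fails or... Key lemma: if `I` is independent and
`H ⊆ M.closure I` and `I` is not spanning, then `insert b I = H` for some `b ∈ H \ I`. -/
lemma CH_eq_insert (hH : CircuitHyperplane M H) {I : Set α} (hI : M.Indep I)
    (hcl : M.closure I = H) : ∃ b ∈ H \ I, insert b I = H := by
  have hIH : I ⊆ H := hcl ▸ M.subset_closure I hI.subset_ground
  have hne : (H \ I).Nonempty := by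
    rw [diff_nonempty]
    exact fun h => CH_not_indep hH (hI.subset h)
  obtain ⟨b, hb⟩ := hne
  refine ⟨b, hb, subset_antisymm (insert_subset hb.1 hIH) ?_⟩
  intro c hc
  by_contra hcI
  simp only [mem_insert_iff, not_or] at hcI
  have hcdep : M.Dep (insert c I) := by
    rw [hI.insert_dep_iff]
    exact ⟨hcl.symm ▸ hc, hcI.2⟩
  have : M.Indep (insert c I) := (hH.1.2 b hb.1).subset (by
    intro x hx
    rcases hx with rfl | hx
    · exact ⟨hc, hcI.1⟩
    · exact ⟨hIH hx, fun h => hb.2 (h ▸ hx)⟩)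
  exact hcdep.not_indep this

lemma CH_exchange (hH : CircuitHyperplane M H) :
    Matroid.ExchangeProperty (fun B => M.IsBase B ∨ B = H) := by
  rintro X Y hX' hY' a ha
  rcases hX' with hX | hX' <;> rcases hY' with hY | hY' <;>
    [skip; rw [hY'] at ha ⊢; rw [hX'] at ha ⊢; rw [hX', hY'] at ha ⊢]
  · obtain ⟨b, hb, hB⟩ := M.isBase_exchange X Y hX hY a ha
    exact ⟨b, hb, Or.inl hB⟩
  · -- X is a base, Y = H
    set I := X \ {a} with hI_def
    have hIi : M.Indep I := hX.indep.subset diff_subset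
    by_cases h : ∀ b ∈ H \ X, b ∈ M.closure I
    · -- H ⊆ closure I; then closure I = H and insert b I = H
      have hHcl : H ⊆ M.closure I := by
        intro c hc
        by_cases hcX : c ∈ X
        · exact M.subset_closure I hIi.subset_ground ⟨hcX, fun h' => ha.2 (h' ▸ hc)⟩
        · exact h c ⟨hc, hcX⟩
      have hclH : M.closure I = H := by
        by_contra hne
        have hflat := flat_closure M I
        have : M.closure I = M.E := hH.2.2.2 _ hflat ⟨hHcl, fun hle =>
          hne (subset_antisymm (fun x hx => by
            by_contra hxH
            exact hxH (hle hx)) hHcl)⟩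
        have hIbase : M.IsBase I := hIi.isBase_of_ground_subset_closure this.symm.subset
        have : I = X := hIbase.eq_of_subset_indep hX.indep diff_subset
        exact (this ▸ ha.1 : a ∈ I).2 rfl
      obtain ⟨b, hb, hbI⟩ := CH_eq_insert hH hIi hclH
      refine ⟨b, ⟨hb.1, fun hbX => hb.2 ⟨hbX, fun h' => ha.2 (h' ▸ hb.1)⟩⟩, Or.inr hbI⟩
    · push_neg at h
      obtain ⟨b, hbHX, hbcl⟩ := h
      have hbE : b ∈ M.E := CH_subset_ground hH hbHX.1
      have hins : M.Indep (insert b I) := by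
        rw [Matroid.insert_indep_iff]
        exact ⟨hIi, fun _ => ⟨hbE, hbcl⟩⟩
      exact ⟨b, hbHX, Or.inl (hX.exchange_isBase_of_indep hbHX.2 hins)⟩
  · -- X = H, Y is a base
    obtain ⟨b, hb⟩ : (Y \ H).Nonempty := by
      rw [diff_nonempty]
      exact CH_base_not_subset hH hY
    exact ⟨b, hb, Or.inl (CH_swap_base hH ha.1 ⟨hY.subset_ground hb.1, hb.2⟩)⟩
  · exact absurd ha.1 ha.2

lemma CH_indep_iff (hH : CircuitHyperplane M H) {K : Set α} :
    (∃ B, (M.IsBase B ∨ B = H) ∧ K ⊆ B) ↔ (M.Indep K ∨ K = H) := by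
  constructor
  · rintro ⟨B, (hB | hB'), hKB⟩
    · exact Or.inl (hB.indep.subset hKB)
    · rw [hB'] at hKB
      rcases eq_or_ssubset_of_subset hKB with h | hKH
      · exact Or.inr h
      · obtain ⟨e, heH, heK⟩ := exists_of_ssubset hKH
        exact Or.inl ((hH.1.2 e heH).subset (subset_diff_singleton hKB heK))
  · rintro (hK | hK')
    · obtain ⟨B, hB, hKB⟩ := Matroid.indep_iff.mp hK
      exact ⟨B, Or.inl hB, hKB⟩
    · exact ⟨H, Or.inr rfl, hK'.subset⟩

lemma CH_maximal_H (hH : CircuitHyperplane M H) {X : Set α} (hHX : H ⊆ X) :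
    Maximal (fun K => (∃ B, (M.IsBase B ∨ B = H) ∧ K ⊆ B) ∧ K ⊆ X) H := by
  constructor
  · exact ⟨⟨H, Or.inr rfl, subset_rfl⟩, hHX⟩
  · rintro K ⟨hK, hKX⟩ hHK
    rcases (CH_indep_iff hH).mp hK with hKi | hK'
    · exact absurd (hKi.subset hHK) (CH_not_indep hH)
    · exact hK'.subset

lemma CH_maximality (hH : CircuitHyperplane M H) :
    ∀ X, X ⊆ M.E → Matroid.ExistsMaximalSubsetProperty
      (fun K => ∃ B, (M.IsBase B ∨ B = H) ∧ K ⊆ B) X := by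
  intro X hXE I hI hIX
  rcases (CH_indep_iff hH).mp hI with hIi | hI'
  case inr => exact ⟨H, hI'.subset, CH_maximal_H hH (hI' ▸ hIX)⟩
  · obtain ⟨J, hIJ, hJmax⟩ := M.maximality X hXE I hIi hIX
    by_cases hJH : J ⊂ H ∧ H ⊆ X
    · exact ⟨H, hIJ.trans hJH.1.subset, CH_maximal_H hH hJH.2⟩
    · refine ⟨J, hIJ, ⟨(CH_indep_iff hH).mpr (Or.inl hJmax.1.1), hJmax.1.2⟩, ?_⟩
      rintro K ⟨hK, hKX⟩ hJK
      rcases (CH_indep_iff hH).mp hK with hKi | hK'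
      · exact hJmax.2 ⟨hKi, hKX⟩ hJK
      · rw [hK'] at hJK hKX
        exact absurd ⟨⟨hJK, fun h => (CH_not_indep hH) (hJmax.1.1.subset h)⟩, hKX⟩ hJH

end Relax

/-- relaxing a circuit-hyperplane yields a matroid. -/
theorem relaxation_exists {α : Type u} (M : Matroid α) (H : Set α)
    (hH : CircuitHyperplane M H) :
    ∃ M' : Matroid α, IsRelaxation M H M' := by
  refine ⟨Matroid.ofBase M.E (fun B => M.IsBase B ∨ B = H)
    (M.exists_isBase.imp fun B hB => Or.inl hB)
    (CH_exchange hH)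
    (CH_maximality hH)
    ?_, rfl, fun B => Iff.rfl⟩
  rintro B (hB | rfl)
  · exact hB.subset_ground
  · exact CH_subset_ground hH

end NearlyBinary
end

section
/- A matroid M is a relaxation of some matroid (i.e., M is obtained from another matroid by relaxing a circuit-hyperplane) if and only if M has a basis B with B nonempty and E(M) − B nonempty such that B ∪ {e} is a circuit of M for every e in E(M) − B. -/
set_option autoImplicit false

open Set

universe u v

namespace NearlyBinary

variable {α : Type u} {β : Type v}

section Aux

variable {M : Matroid α} {B : Set α}

lemma aux_indep (hC : ∀ e ∈ M.E \ B, Circuit M (insert e B)) {e f : α}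
    (he : e ∈ M.E \ B) (hf : f ∈ B) : M.Indep (insert e B \ {f}) :=
  (hC e he).2 f (mem_insert_of_mem _ hf)

lemma aux_base (hB : M.IsBase B)
    (hC : ∀ e ∈ M.E \ B, Circuit M (insert e B)) {e f : α}
    (he : e ∈ M.E \ B) (hf : f ∈ B) : M.IsBase (insert e B \ {f}) := by
  have hI := aux_indep hC he hf
  refine hI.isBase_of_ground_subset_closure ?_
  have hfc : f ∈ M.closure (insert e B \ {f}) := by
    rw [hI.mem_closure_iff]
    left
    rw [insert_diff_singleton, insert_eq_of_mem (mem_insert_of_mem _ hf)]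
    exact (hC e he).1
  have h1 : M.closure (insert e B \ {f}) = M.closure (insert f (insert e B \ {f})) :=
    (Matroid.closure_insert_eq_of_mem_closure hfc).symm
  rw [h1, insert_diff_singleton, insert_eq_of_mem (mem_insert_of_mem _ hf)]
  calc M.E = M.closure B := hB.closure_eq.symm
    _ ⊆ M.closure (insert e B) := M.closure_subset_closure (subset_insert _ _)

/-- The tightening of `M` at the base `B`. -/
def relaxN (M : Matroid α) (B : Set α) (hB : M.IsBase B) (hB1 : B.Nonempty)
    (hB2 : (M.E \ B).Nonempty)
    (hC : ∀ e ∈ M.E \ B, Circuit M (insert e B)) : IndepMatroid α where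
  E := M.E
  Indep I := M.Indep I ∧ I ≠ B
  indep_empty := ⟨M.empty_indep, (hB1.ne_empty).symm⟩
  indep_subset := by
    rintro I J ⟨hJ, hJB⟩ hIJ
    refine ⟨hJ.subset hIJ, fun h => hJB ?_⟩
    subst h
    exact (hB.eq_of_subset_indep hJ hIJ).symm
  indep_aug := by
    rintro I B' ⟨hIi, hIB⟩ hInotmax hB'max
    have hB'base : M.IsBase B' ∧ B' ≠ B := by
      obtain ⟨B'', hB'', hsub⟩ := hB'max.prop.1.exists_isBase_superset
      by_cases hB''B : B'' = B
      · subst hB''B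
        exfalso
        obtain ⟨f, hfB, hfB'⟩ := exists_of_ssubset (hsub.ssubset_of_ne hB'max.prop.2)
        obtain ⟨e, he⟩ := hB2
        have hKi := aux_indep hC he hfB
        have heK : e ∈ insert e B'' \ {f} := ⟨mem_insert _ _, fun h => he.2 (h ▸ hfB)⟩
        have hKne : insert e B'' \ {f} ≠ B'' := fun h => he.2 (h ▸ heK)
        have hB'K : B' ⊆ insert e B'' \ {f} :=
          (subset_diff_singleton hsub hfB').trans
            (diff_subset_diff_left (subset_insert _ _))
        have := hB'max.2 ⟨hKi, hKne⟩ hB'K heK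
        exact he.2 (hsub this)
      · have h1 := hB'max.2 ⟨hB''.indep, hB''B⟩ hsub
        have : B' = B'' := hsub.antisymm h1
        exact ⟨this ▸ hB'', fun h => hB''B (this.symm.trans h)⟩
    have hInotBase : ¬ M.IsBase I := by
      intro hIbase
      exact hInotmax ⟨⟨hIi, hIB⟩, fun K hK hIK => ((hIbase.eq_of_subset_indep hK.1 hIK) ▸
        Subset.rfl : K ⊆ I)⟩
    obtain ⟨x, hx, hxI⟩ := hIi.exists_insert_of_not_isBase hInotBase hB'base.1
    by_cases hxB : insert x I = B
    · have hxmem : x ∈ B := hxB ▸ mem_insert x I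
      have hIeq : I = B \ {x} := by
        rw [← hxB, insert_diff_self_of_notMem hx.2]
      obtain ⟨y, hyB', hyB⟩ : ∃ y ∈ B', y ∉ B := by
        by_contra h
        push_neg at h
        exact hB'base.2 (hB'base.1.eq_of_subset_indep hB.indep h)
      have hyI : y ∉ I := fun hyI => hyB (hIeq ▸ hyI).1
      refine ⟨y, ⟨hyB', hyI⟩, ?_, ?_⟩
      · have hyx : y ≠ x := fun h => hyB (h ▸ hxmem)
        rw [hIeq, insert_diff_singleton_comm hyx]
        exact aux_indep hC ⟨hB'base.1.subset_ground hyB', hyB⟩ hxmem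
      · intro h
        exact hyB (h ▸ mem_insert y I)
    · exact ⟨x, hx, hxI, hxB⟩
  indep_maximal := by
    rintro X hX I ⟨hIi, hIB⟩ hIX
    obtain ⟨J, hIJ, hJmax⟩ := M.existsMaximalSubsetProperty_indep X hX I hIi hIX
    by_cases hJB : J = B
    · subst hJB
      obtain ⟨f, hfB, hfI⟩ : ∃ f ∈ J, f ∉ I := by
        by_contra h
        push_neg at h
        exact hIB (hIJ.antisymm h)
      by_cases hXB : ∃ e ∈ X, e ∉ J
      · obtain ⟨e, heX, heB⟩ := hXB
        have heE : e ∈ M.E \ J := ⟨hX heX, heB⟩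
        have hKi := aux_indep hC heE hfB
        have hKX : insert e J \ {f} ⊆ X :=
          diff_subset.trans (insert_subset heX hJmax.prop.2)
        obtain ⟨J', hKJ', hJ'max⟩ :=
          M.existsMaximalSubsetProperty_indep X hX _ hKi hKX
        have heJ' : e ∈ J' := hKJ' ⟨mem_insert _ _, fun h => heB (h ▸ hfB)⟩
        have hJ'B : J' ≠ J := fun h => heB (h ▸ heJ')
        refine ⟨J', (subset_diff_singleton (hIJ.trans (subset_insert e J)) hfI).trans hKJ',
          ⟨⟨hJ'max.prop.1, hJ'B⟩, hJ'max.prop.2⟩,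
          fun K hK hJ'K => hJ'max.2 ⟨hK.1.1, hK.2⟩ hJ'K⟩
      · push_neg at hXB
        have hXJ : X = J := Subset.antisymm (fun e he => hXB e he) hJmax.prop.2
        refine ⟨J \ {f}, subset_diff_singleton hIJ hfI,
          ⟨⟨hB.indep.subset diff_subset, by
            intro h
            have : f ∈ J \ {f} := h.symm ▸ hfB
            exact this.2 rfl⟩, diff_subset.trans hJmax.prop.2⟩, ?_⟩
        intro K hK hJK
        have hKJ : K ⊆ J := hK.2.trans hXJ.subset
        have hfK : f ∉ K := by
          intro hfK
          refine hK.1.2 (hKJ.antisymm (fun x hx => ?_))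
          by_cases hxf : x = f
          · exact hxf ▸ hfK
          · exact hJK ⟨hx, hxf⟩
        exact subset_diff_singleton hKJ hfK
    · exact ⟨J, hIJ, ⟨⟨hJmax.prop.1, hJB⟩, hJmax.prop.2⟩,
        fun K hK hJK => hJmax.2 ⟨hK.1.1, hK.2⟩ hJK⟩
  subset_ground := fun I hI => hI.1.subset_ground

end Aux

section Aux2

variable {α : Type u} {M : Matroid α} {B : Set α}
variable (hB : M.IsBase B) (hB1 : B.Nonempty) (hB2 : (M.E \ B).Nonempty)
  (hC : ∀ e ∈ M.E \ B, Circuit M (insert e B))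

lemma relaxN_indep {I : Set α} :
    (relaxN M B hB hB1 hB2 hC).matroid.Indep I ↔ M.Indep I ∧ I ≠ B := by
  simp [relaxN]

lemma relaxN_E : (relaxN M B hB hB1 hB2 hC).matroid.E = M.E := by
  simp [relaxN]

lemma relaxN_base {B' : Set α} :
    (relaxN M B hB hB1 hB2 hC).matroid.IsBase B' ↔ M.IsBase B' ∧ B' ≠ B := by
  rw [Matroid.isBase_iff_maximal_indep]
  constructor
  · intro h
    have hi := (relaxN_indep hB hB1 hB2 hC).1 h.prop
    obtain ⟨B'', hB'', hsub⟩ := hi.1.exists_isBase_superset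
    by_cases hB''B : B'' = B
    · subst hB''B
      exfalso
      obtain ⟨f, hfB, hfB'⟩ := exists_of_ssubset (hsub.ssubset_of_ne hi.2)
      obtain ⟨e, he⟩ := id hB2
      have hKi := aux_indep hC he hfB
      have heK : e ∈ insert e B'' \ {f} := ⟨mem_insert _ _, fun h2 => he.2 (h2 ▸ hfB)⟩
      have hKne : insert e B'' \ {f} ≠ B'' := fun h2 => he.2 (h2 ▸ heK)
      have hB'K : B' ⊆ insert e B'' \ {f} :=
        (subset_diff_singleton hsub hfB').trans (diff_subset_diff_left (subset_insert _ _))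
      have := h.2 ((relaxN_indep hB hB1 hB2 hC).2 ⟨hKi, hKne⟩) hB'K heK
      exact he.2 (hsub this)
    · have h1 := h.2 ((relaxN_indep hB hB1 hB2 hC).2 ⟨hB''.indep, hB''B⟩) hsub
      have h2 : B' = B'' := hsub.antisymm h1
      exact ⟨h2 ▸ hB'', fun h3 => hB''B (h2.symm.trans h3)⟩
  · rintro ⟨hM, hne⟩
    refine ⟨(relaxN_indep hB hB1 hB2 hC).2 ⟨hM.indep, hne⟩, fun K hK hsub => ?_⟩
    exact le_of_eq (hM.eq_of_subset_indep ((relaxN_indep hB hB1 hB2 hC).1 hK).1 hsub).symm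

lemma relaxN_relaxation : IsRelaxation (relaxN M B hB hB1 hB2 hC).matroid B M := by
  refine ⟨relaxN_E hB hB1 hB2 hC, fun B' => ?_⟩
  constructor
  · intro h
    by_cases hne : B' = B
    · exact Or.inr hne
    · exact Or.inl ((relaxN_base hB hB1 hB2 hC).2 ⟨h, hne⟩)
  · rintro (h | rfl)
    · exact ((relaxN_base hB hB1 hB2 hC).1 h).1
    · exact hB

lemma relaxN_ch : CircuitHyperplane (relaxN M B hB hB1 hB2 hC).matroid B := by
  set N := (relaxN M B hB hB1 hB2 hC).matroid with hN
  have hNE : N.E = M.E := relaxN_E hB hB1 hB2 hC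
  have hBE : B ⊆ N.E := hNE ▸ hB.subset_ground
  have hNind : ∀ {I : Set α}, N.Indep I ↔ M.Indep I ∧ I ≠ B :=
    fun {I} => relaxN_indep hB hB1 hB2 hC
  refine ⟨⟨⟨fun h => (hNind.1 h).2 rfl, hBE⟩, fun f hf => ?_⟩, ?_, ?_, ?_⟩
  · exact hNind.2 ⟨hB.indep.subset diff_subset,
      fun h => ((h.symm ▸ hf : f ∈ B \ {f}).2 rfl)⟩
  · -- Flat
    refine ⟨fun I X hIB hIX => ?_, hBE⟩
    have hIi := hNind.1 hIB.indep
    obtain ⟨f, hfB, hfI⟩ := exists_of_ssubset (hIB.subset.ssubset_of_ne hIi.2)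
    have hIf : I = B \ {f} := by
      refine hIB.eq_of_subset_indep ?_ (subset_diff_singleton hIB.subset hfI) diff_subset
      exact hNind.2 ⟨hB.indep.subset diff_subset,
        fun h => ((h.symm ▸ hfB : f ∈ B \ {f}).2 rfl)⟩
    intro x hx
    by_cases hxI : x ∈ I
    · exact (hIf ▸ hxI : x ∈ B \ {f}).1
    · by_contra hxB
      have hdep := hIX.insert_dep ⟨hx, hxI⟩
      have hxE : x ∈ M.E := hNE ▸ hIX.subset_ground hx
      have hxf : x ≠ f := fun h => hxB (h ▸ hfB)
      have : N.Indep (insert x I) := by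
        rw [hIf, insert_diff_singleton_comm hxf]
        exact hNind.2 ⟨aux_indep hC ⟨hxE, hxB⟩ hfB,
          fun h => hxB (h ▸ (⟨mem_insert _ _, hxf⟩ : x ∈ insert x B \ {f}))⟩
      exact hdep.1 this
  · -- B ≠ N.E
    intro h
    obtain ⟨e, he⟩ := id hB2
    exact he.2 (h.symm ▸ (hNE.symm ▸ he.1 : e ∈ N.E))
  · -- maximal
    intro F hF hss
    obtain ⟨e, heF, heB⟩ := exists_of_ssubset hss
    have heE : e ∈ M.E := hNE ▸ hF.subset_ground heF
    obtain ⟨f, hf⟩ := id hB1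
    have hKM : M.IsBase (insert e B \ {f}) := aux_base hB hC ⟨heE, heB⟩ hf
    have hKN : N.IsBase (insert e B \ {f}) := (relaxN_base hB hB1 hB2 hC).2
      ⟨hKM, fun h => heB (h ▸ (⟨mem_insert _ _, fun h2 => heB (h2 ▸ hf)⟩ :
        e ∈ insert e B \ {f}))⟩
    have hKF : insert e B \ {f} ⊆ F := diff_subset.trans (insert_subset heF hss.subset)
    refine (hF.subset_ground).antisymm ?_
    calc N.E = N.closure (insert e B \ {f}) := hKN.closure_eq.symm
      _ ⊆ N.closure F := N.closure_subset_closure hKF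
      _ = F := hF.closure

end Aux2

/-- `M` is a relaxation of some matroid iff it has a basis `B`, with `B` and
`E(M) - B` nonempty, such that `B ∪ {e}` is a circuit for every `e ∈ E(M) - B`. -/
theorem relaxation_iff_basis {α : Type u} (M : Matroid α) :
    (∃ (N : Matroid α) (H : Set α), CircuitHyperplane N H ∧ IsRelaxation N H M) ↔
      ∃ B, M.IsBase B ∧ B.Nonempty ∧ (M.E \ B).Nonempty ∧
        ∀ e ∈ M.E \ B, Circuit M (insert e B) := by
  constructor
  · rintro ⟨N, H, ⟨⟨hHdep, hHmin⟩, hHflat, hHne, _⟩, hE, hbase⟩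
    have hMH : M.IsBase H := (hbase H).2 (Or.inr rfl)
    have hNtoM : ∀ I, N.Indep I → M.Indep I := by
      intro I hI
      obtain ⟨B', hB', hsub⟩ := hI.exists_isBase_superset
      exact Matroid.indep_iff.2 ⟨B', (hbase B').2 (Or.inl hB'), hsub⟩
    refine ⟨H, hMH, ?_, ?_, ?_⟩
    · exact nonempty_iff_ne_empty.2 fun h => hHdep.1 (h ▸ N.empty_indep)
    · rw [hE]
      exact diff_nonempty.2 fun h => hHne (hHdep.2.antisymm h)
    · intro e he
      have heN : e ∈ N.E := hE ▸ he.1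
      constructor
      · refine ⟨?_, insert_subset he.1 hMH.subset_ground⟩
        intro hi
        obtain ⟨B', hB', hsub⟩ := hi.exists_isBase_superset
        rcases (hbase B').1 hB' with hNB | rfl
        · exact hHdep.1 (hNB.indep.subset ((subset_insert e H).trans hsub))
        · exact he.2 (hsub (mem_insert _ _))
      · intro f hf
        rcases mem_insert_iff.1 hf with rfl | hfH
        · rw [insert_diff_self_of_notMem he.2]
          exact hMH.indep
        · have hef : e ≠ f := fun h => he.2 (h ▸ hfH)
          rw [← insert_diff_singleton_comm hef]
          have hind : N.Indep (H \ {f}) := hHmin f hfH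
          have hecl : e ∉ N.closure (H \ {f}) := fun hecl =>
            he.2 ((hHflat.closure ▸ N.closure_subset_closure diff_subset) hecl)
          refine hNtoM _ ?_
          rw [hind.insert_indep_iff_of_notMem (fun h => he.2 h.1)]
          exact ⟨heN, hecl⟩
  · rintro ⟨B, hB, hB1, hB2, hC⟩
    exact ⟨(relaxN M B hB hB1 hB2 hC).matroid, B, relaxN_ch hB hB1 hB2 hC,
      relaxN_relaxation hB hB1 hB2 hC⟩


end NearlyBinary
end

section
/- If M is a connected binary matroid with a circuit-hyperplane H, then the relaxation of M along H is non-binary. -/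
set_option autoImplicit false

open Set

universe u v

namespace NearlyBinary

variable {α : Type u} {β : Type v}

/-! ### Auxiliary lemmas -/

section Aux

variable {ι : Type u}

private lemma zmod2_eq_one {a : ZMod 2} (ha : a ≠ 0) : a = 1 := by
  revert ha; revert a; decide

private lemma fun_eq_of_add_eq_zero {v w : ι → ZMod 2} (h : v + w = 0) : v = w := by
  have key : ∀ a b : ZMod 2, a + b = 0 → a = b := by decide
  funext i
  exact key _ _ (congrFun h i)

/-- A binary representation characterizes independence via `Finsupp` combinations. -/
private lemma repr_iff_finsupp (N : Matroid α) (φ : α → ι → ZMod 2)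
    (hrep : ∀ I, I ⊆ N.E → (N.Indep I ↔ LinearIndependent (ZMod 2) (fun x : I => φ x.1)))
    {I : Set α} (hI : I ⊆ N.E) :
    N.Indep I ↔ ∀ l : α →₀ ZMod 2, ↑l.support ⊆ I →
      Finsupp.linearCombination (ZMod 2) φ l = 0 → l = 0 := by
  rw [hrep I hI]
  have h1 : (fun x : I => φ x.1) = (φ ∘ (Subtype.val : I → α)) := rfl
  rw [h1, linearIndependent_comp_subtype_iff, linearIndepOn_iff]
  simp only [Finsupp.mem_supported]

/-- In a binary representation, the vectors of a circuit (which is necessarily finite)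
sum to zero. -/
private lemma circuit_sum (N : Matroid α) (φ : α → ι → ZMod 2)
    (hrep : ∀ I, I ⊆ N.E → (N.Indep I ↔ LinearIndependent (ZMod 2) (fun x : I => φ x.1)))
    {C : Set α} (hC : Circuit N C) :
    ∃ s : Finset α, ↑s = C ∧ ∑ x ∈ s, φ x = 0 := by
  have hCE : C ⊆ N.E := hC.1.2
  have hdep : ¬ N.Indep C := hC.1.1
  rw [repr_iff_finsupp N φ hrep hCE] at hdep
  push_neg at hdep
  obtain ⟨l, hlsupp, hlsum, hlne⟩ := hdep
  have hsuppC : (↑l.support : Set α) = C := by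
    by_contra hne
    have hss : (↑l.support : Set α) ⊂ C := hlsupp.ssubset_of_ne hne
    obtain ⟨e, heC, hesupp⟩ := Set.exists_of_ssubset hss
    have hsub : (↑l.support : Set α) ⊆ C \ {e} := by
      intro x hx
      exact ⟨hlsupp hx, fun hxe => hesupp (hxe ▸ hx)⟩
    have hind := hC.2 e heC
    rw [repr_iff_finsupp N φ hrep (Set.diff_subset.trans hCE)] at hind
    exact hlne (hind l hsub hlsum)
  refine ⟨l.support, hsuppC, ?_⟩
  rw [Finsupp.linearCombination_apply, Finsupp.sum] at hlsum
  rw [← hlsum]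
  refine Finset.sum_congr rfl fun x hx => ?_
  rw [zmod2_eq_one (Finsupp.mem_support_iff.mp hx), one_smul]

/-- In a binary representation, a nonempty set of vectors summing to zero is dependent. -/
private lemma not_indep_of_sum_eq_zero (N : Matroid α) (φ : α → ι → ZMod 2)
    (hrep : ∀ I, I ⊆ N.E → (N.Indep I ↔ LinearIndependent (ZMod 2) (fun x : I => φ x.1)))
    (s : Finset α) (hne : s.Nonempty) (hsub : ↑s ⊆ N.E) (hsum : ∑ x ∈ s, φ x = 0) :
    ¬ N.Indep (↑s : Set α) := by
  classical
  intro hind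
  rw [repr_iff_finsupp N φ hrep hsub] at hind
  set l : α →₀ ZMod 2 := ⟨s, fun a => if a ∈ s then (1 : ZMod 2) else 0, by
    intro a
    by_cases h : a ∈ s <;> simp [h]⟩ with hl
  have hlsupp : (↑l.support : Set α) ⊆ (↑s : Set α) := by
    rw [hl]
  have happ : ∀ a ∈ s, l a = 1 := by
    intro a ha
    show (if a ∈ s then (1 : ZMod 2) else 0) = 1
    simp [ha]
  have hlsum : Finsupp.linearCombination (ZMod 2) φ l = 0 := by
    rw [Finsupp.linearCombination_apply, Finsupp.sum]
    have : l.support = s := rfl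
    rw [this, ← hsum]
    refine Finset.sum_congr rfl fun x hx => ?_
    rw [happ x hx, one_smul]
  have hl0 := hind l hlsupp hlsum
  obtain ⟨a, ha⟩ := hne
  have hza : l a = 0 := by rw [hl0]; simp
  rw [happ a ha] at hza
  exact one_ne_zero hza

end Aux

/-- the relaxation of a connected binary matroid is non-binary. -/
theorem relaxation_connected_nonbinary {α : Type u} (M M' : Matroid α) (H : Set α)
    (hconn : Connected M) (hbin : IsBinary M)
    (hH : CircuitHyperplane M H) (hrel : IsRelaxation M H M') :
    ¬ IsBinary M' := by
  classical
  rintro ⟨ι, φ, hφ⟩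
  obtain ⟨⟨hHdep, hHmin⟩, hHflat, hHneE, -⟩ := hH
  obtain ⟨hE', hbase'⟩ := hrel
  have hHE : H ⊆ M.E := hHdep.2
  -- H is a base of M', hence independent in M'
  have hHbase : M'.IsBase H := (hbase' H).mpr (Or.inr rfl)
  have hHindep' : M'.Indep H := hHbase.indep
  -- independence in M'
  have hI' : ∀ I : Set α, M'.Indep I ↔ (M.Indep I ∨ I ⊆ H) := by
    intro I
    rw [Matroid.indep_iff]
    constructor
    · rintro ⟨B, hB, hIB⟩
      rcases (hbase' B).mp hB with hB | rfl
      · exact Or.inl (Matroid.indep_iff.mpr ⟨B, hB, hIB⟩)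
      · exact Or.inr hIB
    · rintro (hI | hIH)
      · obtain ⟨B, hB, hIB⟩ := Matroid.indep_iff.mp hI
        exact ⟨B, (hbase' B).mpr (Or.inl hB), hIB⟩
      · exact ⟨H, hHbase, hIH⟩
  -- circuits of M' of the form H ∪ {e}
  have hcirc' : ∀ e ∈ M.E, e ∉ H → Circuit M' (H ∪ {e}) := by
    intro e heE heH
    constructor
    · refine ⟨?_, ?_⟩
      · rw [hI']
        rintro (hind | hsub)
        · exact hHdep.1 (hind.subset Set.subset_union_left)
        · exact heH (hsub (Or.inr rfl))
      · rw [hE']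
        exact Set.union_subset hHE (by simpa using heE)
    · intro x hx
      rcases hx with hxH | hxe
      · -- remove an element of H
        have hxne : x ≠ e := fun h => heH (h ▸ hxH)
        have hset : (H ∪ {e}) \ {x} = insert e (H \ {x}) := by
          ext y
          simp only [Set.mem_diff, Set.mem_union, Set.mem_singleton_iff, Set.mem_insert_iff]
          constructor
          · rintro ⟨hy | rfl, hyx⟩
            · exact Or.inr ⟨hy, hyx⟩
            · exact Or.inl rfl
          · rintro (rfl | ⟨hy, hyx⟩)
            · exact ⟨Or.inr rfl, hxne.symm⟩
            · exact ⟨Or.inl hy, hyx⟩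
        rw [hset, hI']
        left
        have hHx : M.Indep (H \ {x}) := hHmin x hxH
        have heHx : e ∉ H \ {x} := fun h => heH h.1
        rw [hHx.insert_indep_iff_of_notMem heHx]
        refine ⟨heE, fun hecl => heH ?_⟩
        have : M.closure (H \ {x}) ⊆ M.closure H := M.closure_subset_closure Set.diff_subset
        have := this hecl
        rwa [hHflat.closure] at this
      · -- remove e itself
        rcases hxe with rfl
        have hset : (H ∪ {x}) \ {x} = H := by
          ext y
          simp only [Set.mem_diff, Set.mem_union, Set.mem_singleton_iff]
          constructor
          · rintro ⟨hy | rfl, hyx⟩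
            · exact hy
            · exact absurd rfl hyx
          · intro hy
            exact ⟨Or.inl hy, fun h => heH (h ▸ hy)⟩
        rw [hset]
        exact hHindep'
  -- now derive a contradiction via connectivity
  refine hconn ⟨H, ⟨hHE, ?_⟩, ?_, ?_⟩
  · -- every circuit of M is contained in H or in M.E \ H
    intro C hC
    by_contra hsplit
    push_neg at hsplit
    obtain ⟨hnH, hnEH⟩ := hsplit
    have hCE : C ⊆ M.E := hC.1.2
    obtain ⟨b, hbC, hbH⟩ : ∃ b ∈ C, b ∉ H := by
      by_contra h; push_neg at h; exact hnH h
    obtain ⟨a, haC, haH⟩ : ∃ a ∈ C, a ∈ H := by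
      by_contra h
      push_neg at h
      exact hnEH fun x hx => ⟨hCE hx, h x hx⟩
    -- C is also a circuit of M'
    have hCc' : Circuit M' C := by
      constructor
      · refine ⟨?_, by rw [hE']; exact hCE⟩
        rw [hI']
        rintro (hind | hsub)
        · exact hC.1.1 hind
        · exact hbH (hsub hbC)
      · intro e he
        rw [hI']
        exact Or.inl (hC.2 e he)
    -- a finite set t with ↑t = H
    obtain ⟨s₀, hs₀, -⟩ := circuit_sum M' φ hφ (hcirc' b (hCE hbC) hbH)
    have hbs₀ : b ∈ s₀ := by
      rw [← Finset.mem_coe, hs₀]; exact Or.inr rfl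
    set t : Finset α := s₀.erase b with ht
    have htH : (↑t : Set α) = H := by
      rw [ht, Finset.coe_erase, hs₀]
      ext y
      simp only [Set.mem_diff, Set.mem_union, Set.mem_singleton_iff]
      constructor
      · rintro ⟨hy | rfl, hyb⟩
        · exact hy
        · exact absurd rfl hyb
      · intro hy
        exact ⟨Or.inl hy, fun h => hbH (h ▸ hy)⟩
    set v : ι → ZMod 2 := ∑ x ∈ t, φ x with hv
    -- every element of C \ H is represented by v
    have hkey : ∀ e ∈ C, e ∉ H → φ e = v := by
      intro e heC heH
      obtain ⟨s, hs, hsum⟩ := circuit_sum M' φ hφ (hcirc' e (hCE heC) heH)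
      have het : e ∉ t := by
        intro h
        exact heH (htH ▸ Finset.mem_coe.mpr h)
      have hseq : s = insert e t := by
        rw [← Finset.coe_inj, Finset.coe_insert, hs, htH]
        rw [Set.union_comm, Set.singleton_union]
      rw [hseq, Finset.sum_insert het] at hsum
      exact fun_eq_of_add_eq_zero hsum
    -- sum over C
    obtain ⟨sC, hsC, hsCsum⟩ := circuit_sum M' φ hφ hCc'
    set sA : Finset α := sC.filter (· ∈ H) with hsA
    set sB : Finset α := sC.filter (· ∉ H) with hsB
    have hsplitsum : ∑ x ∈ sA, φ x + ∑ x ∈ sB, φ x = 0 := by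
      rw [hsA, hsB, Finset.sum_filter_add_sum_filter_not]
      exact hsCsum
    have hsBsum : ∑ x ∈ sB, φ x = sB.card • v := by
      rw [← Finset.sum_const]
      refine Finset.sum_congr rfl fun x hx => ?_
      rw [hsB, Finset.mem_filter] at hx
      exact hkey x (hsC ▸ Finset.mem_coe.mpr hx.1) hx.2
    have hsAH : (↑sA : Set α) ⊆ H := by
      intro x hx
      rw [Finset.mem_coe, hsA, Finset.mem_filter] at hx
      exact hx.2
    have hsAE : (↑sA : Set α) ⊆ M'.E := hsAH.trans (hE' ▸ hHE)
    rcases Nat.even_or_odd sB.card with hev | hodd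
    · -- even case: sA is a nonempty dependent subset of H
      have hcard0 : (sB.card : ZMod 2) = 0 := by
        rw [ZMod.natCast_eq_zero_iff]
        exact hev.two_dvd
      have hB0 : ∑ x ∈ sB, φ x = 0 := by
        rw [hsBsum, ← Nat.cast_smul_eq_nsmul (ZMod 2), hcard0, zero_smul]
      rw [hB0, add_zero] at hsplitsum
      have hane : sA.Nonempty := ⟨a, by
        rw [hsA, Finset.mem_filter]
        exact ⟨by rw [← Finset.mem_coe, hsC] at *; exact haC, haH⟩⟩
      exact not_indep_of_sum_eq_zero M' φ hφ sA hane hsAE hsplitsum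
        (hHindep'.subset hsAH)
    · -- odd case: t \ sA is a nonempty dependent subset of H
      have hcard1 : (sB.card : ZMod 2) = 1 := by
        apply zmod2_eq_one
        rw [Ne, ZMod.natCast_eq_zero_iff]
        exact fun h => (Nat.not_even_iff_odd.mpr hodd) (even_iff_two_dvd.mpr h)
      have hBv : ∑ x ∈ sB, φ x = v := by
        rw [hsBsum, ← Nat.cast_smul_eq_nsmul (ZMod 2), hcard1, one_smul]
      rw [hBv] at hsplitsum
      have hAv : ∑ x ∈ sA, φ x = v := fun_eq_of_add_eq_zero hsplitsum
      have hsAt : sA ⊆ t := by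
        intro x hx
        rw [← Finset.mem_coe, htH]
        exact hsAH (Finset.mem_coe.mpr hx)
      have hdiffsum : ∑ x ∈ t \ sA, φ x = 0 := by
        have hsd := Finset.sum_sdiff (f := φ) hsAt
        rw [hAv, ← hv] at hsd
        exact add_right_cancel (hsd.trans (zero_add v).symm)
      have hdiffne : (t \ sA).Nonempty := by
        rw [Finset.sdiff_nonempty]
        intro hts
        have hteq : sA = t := subset_antisymm hsAt hts
        -- then H ⊆ C \ {b}, so H would be independent in M
        have hHC : H ⊆ C := by
          rw [← htH, ← hteq, ← hsC]
          exact Finset.coe_subset.mpr (by rw [hsA]; exact Finset.filter_subset _ _)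
        have hHCb : H ⊆ C \ {b} := fun x hx => ⟨hHC hx, fun h => hbH (h ▸ hx)⟩
        exact hHdep.1 ((hC.2 b hbC).subset hHCb)
      have hdiffH : (↑(t \ sA) : Set α) ⊆ H := by
        intro x hx
        rw [Finset.coe_sdiff] at hx
        exact htH ▸ hx.1
      exact not_indep_of_sum_eq_zero M' φ hφ (t \ sA) hdiffne
        (hdiffH.trans (hE' ▸ hHE)) hdiffsum (hHindep'.subset hdiffH)
  · -- H is nonempty
    rw [Set.nonempty_iff_ne_empty]
    rintro rfl
    exact hHdep.1 M.empty_indep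
  · -- M.E \ H is nonempty
    rw [Set.diff_nonempty]
    exact fun h => hHneE (subset_antisymm hHE h)

end NearlyBinary
end

section
/- If M is an n-connected matroid with a circuit-hyperplane H, then the relaxation of M along H is also n-connected. -/
set_option autoImplicit false

open Set

universe u v

namespace NearlyBinary

variable {α : Type u} {β : Type v}

lemma le_eRk_aux {M : Matroid α} {I X : Set α} (hI : M.Indep I) (hIX : I ⊆ X) :
    I.encard ≤ eRk M X :=
  le_biSup _ ⟨hI, hIX⟩

lemma eRk_mono_aux {M M' : Matroid α} (h : ∀ I, M.Indep I → M'.Indep I) (X : Set α) :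
    eRk M X ≤ eRk M' X :=
  iSup₂_le fun I ⟨hI, hIX⟩ => le_eRk_aux (h I hI) hIX

lemma encard_H_le_aux {M : Matroid α} {H : Set α} (hC : Circuit M H) (hHy : Hyperplane M H) :
    H.encard ≤ eRk M M.E := by
  obtain ⟨hdep, hmin⟩ := hC
  obtain ⟨e, he⟩ := hdep.nonempty
  have hHE : H ⊆ M.E := hHy.1.subset_ground
  obtain ⟨f, hfE, hfH⟩ : ∃ f, f ∈ M.E ∧ f ∉ H := by
    by_contra h
    push_neg at h
    exact hHy.2.1 (hHE.antisymm h)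
  have hind : M.Indep (H \ {e}) := hmin e he
  have hclH : M.closure (H \ {e}) ⊆ H := by
    have := M.closure_subset_closure (diff_subset : H \ {e} ⊆ H)
    rwa [hHy.1.closure] at this
  have hins : M.Indep (insert f (H \ {e})) := by
    rw [hind.insert_indep_iff_of_notMem (fun hf => hfH hf.1)]
    exact ⟨hfE, fun hf => hfH (hclH hf)⟩
  have hsub : insert f (H \ {e}) ⊆ M.E :=
    insert_subset hfE (diff_subset.trans hHE)
  calc H.encard = (H \ {e}).encard + 1 := by
        rw [← encard_insert_of_notMem (fun h => h.2 rfl : e ∉ H \ {e}),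
          insert_diff_singleton, insert_eq_of_mem he]
    _ = (insert f (H \ {e})).encard := by
        rw [encard_insert_of_notMem (fun hf => hfH hf.1)]
    _ ≤ eRk M M.E := le_eRk_aux hins hsub

/-- relaxation preserves Tutte `n`-connectivity. -/
theorem relaxation_tutteConnected {α : Type u} (M M' : Matroid α) (H : Set α) (n : ℕ)
    (hconn : TutteConnected n M) (hH : CircuitHyperplane M H)
    (hrel : IsRelaxation M H M') :
    TutteConnected n M' := by
  obtain ⟨hE, hB⟩ := hrel
  have hMM' : ∀ I, M.Indep I → M'.Indep I := by
    intro I hI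
    obtain ⟨B, hBase, hIB⟩ := hI.exists_isBase_superset
    exact (((hB B).mpr (Or.inl hBase)).indep).subset hIB
  have hground : eRk M' M'.E ≤ eRk M M.E := by
    refine iSup₂_le fun I ⟨hI, _⟩ => ?_
    obtain ⟨B, hBase, hIB⟩ := hI.exists_isBase_superset
    rcases (hB B).mp hBase with hMB | rfl
    · exact le_eRk_aux (hMB.indep.subset hIB) ((hIB.trans hMB.subset_ground))
    · exact (encard_mono hIB).trans (encard_H_le_aux hH.1 hH.2)
  intro k hk1 hkn hsep
  refine hconn k hk1 hkn ?_
  obtain ⟨X, hXE, h1, h2, h3⟩ := hsep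
  rw [hE] at hXE h2 h3
  refine ⟨X, hXE, h1, h2, ?_⟩
  calc eRk M X + eRk M (M.E \ X)
      ≤ eRk M' X + eRk M' (M.E \ X) :=
        add_le_add (eRk_mono_aux hMM' X) (eRk_mono_aux hMM' (M.E \ X))
    _ ≤ eRk M' M.E + ((k : ℕ∞) - 1) := h3
    _ ≤ eRk M M.E + ((k : ℕ∞) - 1) := by
        exact add_le_add_left (hE ▸ hground) _

end NearlyBinary
end

section
/- The 2-sum of two binary matroids is binary. -/
set_option autoImplicit false

open Set

universe u v

namespace NearlyBinary

variable {α : Type u} {β : Type v}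

section AuxLemmas

/-- Every dependent set contains a circuit. -/
lemma aux_dep_circuit (M : Matroid α) {D : Set α} (hD : M.Dep D) :
    ∃ C, C ⊆ D ∧ Circuit M C := by
  obtain ⟨I, hI⟩ := M.exists_isBasis D hD.subset_ground
  obtain ⟨e, heD, heI⟩ : ∃ e ∈ D, e ∉ I := by
    by_contra hcon
    push_neg at hcon
    have : I = D := hI.subset.antisymm hcon
    exact hD.not_indep (this ▸ hI.indep)
  have heE : e ∈ M.E := hD.subset_ground heD
  have hecl : e ∈ M.closure I := hI.subset_closure heD
  set Js : Set (Set α) := {J | J ⊆ I ∧ e ∈ M.closure J} with hJs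
  have hIJs : I ∈ Js := ⟨Subset.rfl, hecl⟩
  have hne : Js.Nonempty := ⟨I, hIJs⟩
  set J₀ : Set α := ⋂₀ Js with hJ₀def
  have hJ₀I : J₀ ⊆ I := sInter_subset_of_mem hIJs
  have hJ₀ : M.Indep J₀ := hI.indep.subset hJ₀I
  have hecl₀ : e ∈ M.closure J₀ := by
    rw [hJ₀def, hI.indep.closure_sInter_eq_biInter_closure_of_forall_subset hne fun J hJ => hJ.1]
    exact mem_iInter₂.mpr fun J hJ => hJ.2
  have heJ₀ : e ∉ J₀ := fun hmem => heI (hJ₀I hmem)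
  refine ⟨insert e J₀, insert_subset heD (hJ₀I.trans hI.subset), ?_, ?_⟩
  · exact hJ₀.insert_dep_iff.mpr ⟨hecl₀, heJ₀⟩
  · rintro f (rfl | hf)
    · have : insert f J₀ \ {f} = J₀ := by
        rw [insert_diff_of_mem _ (mem_singleton f), diff_singleton_eq_self heJ₀]
      rwa [this]
    · have hef : e ≠ f := fun hef => heJ₀ (hef ▸ hf)
      have hrw : insert e J₀ \ {f} = insert e (J₀ \ {f}) := by
        rw [insert_diff_of_notMem _ (by simpa using hef)]
      rw [hrw]
      have hnotmem : e ∉ M.closure (J₀ \ {f}) := by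
        intro hecl'
        have : J₀ \ {f} ∈ Js := ⟨(diff_subset).trans hJ₀I, hecl'⟩
        exact (sInter_subset_of_mem this (show f ∈ J₀ from hf)).2 rfl
      exact ((hJ₀.subset diff_subset).insert_indep_iff_of_notMem
        (fun hmem => heJ₀ hmem.1)).mpr ⟨heE, hnotmem⟩

lemma aux_zmod2_ne (x : ZMod 2) (h : x ≠ 0) : x = 1 := by revert h; revert x; decide

lemma aux_zmod2_add (x y : ZMod 2) (h : x + y = 0) : x = y := by revert h; revert x y; decide

lemma aux_zmod2_self (x : ZMod 2) : x + x = 0 := by revert x; decide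

/-- From linear dependence over GF(2), extract a finite subset with zero sum. -/
lemma aux_lindep_finset {ι : Type v} (φ : α → ι → ZMod 2) {I : Set α}
    (h : ¬ LinearIndependent (ZMod 2) (fun x : I => φ x.1)) :
    ∃ S : Finset α, ↑S ⊆ I ∧ S.Nonempty ∧ ∑ x ∈ S, φ x = 0 := by
  classical
  rw [not_linearIndependent_iff] at h
  obtain ⟨s, g, hsum, i, his, hgi⟩ := h
  set t : Finset I := s.filter (fun j => g j ≠ 0) with ht
  have hsum' : ∑ j ∈ t, φ j.1 = 0 := by
    have h1 : ∑ j ∈ t, g j • φ j.1 = 0 := by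
      rw [← hsum, ht]
      refine Finset.sum_subset (Finset.filter_subset _ _) fun x hx hxt => ?_
      have hg0 : g x = 0 := by
        by_contra hg; exact hxt (Finset.mem_filter.mpr ⟨hx, hg⟩)
      rw [hg0, zero_smul]
    rw [← h1]
    refine Finset.sum_congr rfl fun j hj => ?_
    rw [aux_zmod2_ne (g j) (Finset.mem_filter.mp hj).2, one_smul]
  refine ⟨t.map ⟨Subtype.val, Subtype.val_injective⟩, ?_, ?_, ?_⟩
  · intro x hx
    simp only [Finset.mem_coe, Finset.mem_map, Function.Embedding.coeFn_mk] at hx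
    obtain ⟨y, _, rfl⟩ := hx
    exact y.2
  · exact Finset.map_nonempty.mpr ⟨i, Finset.mem_filter.mpr ⟨his, hgi⟩⟩
  · rwa [Finset.sum_map]

/-- A finite nonempty subset with zero sum gives linear dependence. -/
lemma aux_not_lindep {ι : Type v} (φ : α → ι → ZMod 2) {I : Set α} {S : Finset α}
    (hS : ↑S ⊆ I) (hne : S.Nonempty) (h0 : ∑ x ∈ S, φ x = 0) :
    ¬ LinearIndependent (ZMod 2) (fun x : I => φ x.1) := by
  classical
  rw [not_linearIndependent_iff]
  have hinj : Function.Injective (fun x : {y // y ∈ S} => (⟨x.1, hS x.2⟩ : I)) := by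
    intro a b hab
    exact Subtype.ext (by simpa using congrArg Subtype.val hab)
  refine ⟨S.attach.map ⟨_, hinj⟩, fun _ => 1, ?_, ?_⟩
  · simp only [Finset.sum_map, Function.Embedding.coeFn_mk, one_smul]
    rw [← h0]
    exact Finset.sum_attach S (fun x => φ x)
  · obtain ⟨x, hx⟩ := hne
    exact ⟨⟨x, hS hx⟩, Finset.mem_map.mpr ⟨⟨x, hx⟩, Finset.mem_attach _ _, rfl⟩, one_ne_zero⟩

variable {ι : Type v} {M : Matroid α} {φ : α → ι → ZMod 2}

/-- In a binary representation, the columns of a circuit sum to zero. -/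
lemma aux_circuit_sum
    (hrep : ∀ I, I ⊆ M.E → (M.Indep I ↔ LinearIndependent (ZMod 2) (fun x : I => φ x.1)))
    {C : Set α} (hC : Circuit M C) :
    ∃ S : Finset α, ↑S = C ∧ ∑ x ∈ S, φ x = 0 := by
  have hCE : C ⊆ M.E := hC.1.subset_ground
  have hdep : ¬ LinearIndependent (ZMod 2) (fun x : C => φ x.1) :=
    fun hli => hC.1.not_indep ((hrep C hCE).mpr hli)
  obtain ⟨S, hSC, hSne, hS0⟩ := aux_lindep_finset φ hdep
  refine ⟨S, ?_, hS0⟩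
  by_contra hne
  obtain ⟨e, heC, heS⟩ : ∃ e ∈ C, e ∉ (S : Set α) := by
    by_contra hcon; push_neg at hcon
    exact hne (hSC.antisymm hcon)
  have hSsub : (S : Set α) ⊆ C \ {e} := fun x hx => ⟨hSC hx, fun hxe => heS (hxe ▸ hx)⟩
  have hindep : M.Indep (S : Set α) := (hC.2 e heC).subset hSsub
  exact aux_not_lindep φ Subset.rfl hSne hS0 ((hrep _ (hSC.trans hCE)).mp hindep)

/-- A finite nonempty set of ground elements with zero sum contains a circuit. -/
lemma aux_sum_circuit
    (hrep : ∀ I, I ⊆ M.E → (M.Indep I ↔ LinearIndependent (ZMod 2) (fun x : I => φ x.1)))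
    {S : Finset α} (hS : ↑S ⊆ M.E) (hne : S.Nonempty) (h0 : ∑ x ∈ S, φ x = 0) :
    ∃ C, C ⊆ (S : Set α) ∧ Circuit M C := by
  have hdep : M.Dep (S : Set α) := by
    rw [Matroid.dep_iff]
    exact ⟨fun hi => aux_not_lindep φ Subset.rfl hne h0 ((hrep _ hS).mp hi), hS⟩
  exact aux_dep_circuit M hdep

end AuxLemmas

/-- the 2-sum of two binary matroids is binary. -/
theorem twoSum_binary {α : Type u} (M₁ M₂ M : Matroid α) (p : α)
    (h : IsTwoSum M₁ M₂ p M) (h₁ : IsBinary M₁) (h₂ : IsBinary M₂) :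
    IsBinary M := by
  classical
  obtain ⟨ι₁, φ₁, hφ₁⟩ := h₁
  obtain ⟨ι₂, φ₂, hφ₂⟩ := h₂
  obtain ⟨hE12, hl₁, -, hl₂, -, hME, hcirc⟩ := h
  have hpmem : p ∈ M₁.E ∩ M₂.E := hE12.symm ▸ (mem_singleton p)
  have hp₁ : p ∈ M₁.E := hpmem.1
  have hp₂ : p ∈ M₂.E := hpmem.2
  have hip₁ : M₁.Indep {p} := by
    by_contra hcon; exact hl₁ ⟨hp₁, hcon⟩
  have hip₂ : M₂.Indep {p} := by
    by_contra hcon; exact hl₂ ⟨hp₂, hcon⟩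
  -- the column of `p` is nonzero in each representation
  have hnz : ∀ {ι : Type u} (N : Matroid α) (φ : α → ι → ZMod 2),
      (∀ I, I ⊆ N.E → (N.Indep I ↔ LinearIndependent (ZMod 2) (fun x : I => φ x.1))) →
      p ∈ N.E → N.Indep {p} → ∃ i, φ p i = 1 := by
    intro ι N φ hrep hpN hpi
    by_contra hcon
    push_neg at hcon
    have hz : ∀ i, φ p i = 0 := fun i => by
      by_contra hne; exact hcon i (aux_zmod2_ne _ hne)
    have h0 : ∑ x ∈ ({p} : Finset α), φ x = 0 := by
      rw [Finset.sum_singleton]; funext i; exact hz i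
    have hsub : ↑({p} : Finset α) ⊆ ({p} : Set α) := by simp
    exact aux_not_lindep φ hsub ⟨p, Finset.mem_singleton_self p⟩ h0
      ((hrep {p} (singleton_subset_iff.mpr hpN)).mp hpi)
  obtain ⟨i₁, hi₁⟩ := hnz M₁ φ₁ hφ₁ hp₁ hip₁
  obtain ⟨i₂, hi₂⟩ := hnz M₂ φ₂ hφ₂ hp₂ hip₂
  -- the glued representation
  set ψ : α → (ι₁ ⊕ ι₂) → ZMod 2 := fun e =>
    if e ∈ M₁.E then Sum.elim (φ₁ e) (fun j => φ₁ e i₁ * φ₂ p j)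
    else Sum.elim (fun i => φ₂ e i₂ * φ₁ p i) (φ₂ e) with hψdef
  have hψ1 : ∀ x, x ∈ M₁.E → ψ x = Sum.elim (φ₁ x) (fun j => φ₁ x i₁ * φ₂ p j) :=
    fun x hx => by rw [hψdef]; exact if_pos hx
  have hψ2 : ∀ x, x ∉ M₁.E → ψ x = Sum.elim (fun i => φ₂ x i₂ * φ₁ p i) (φ₂ x) :=
    fun x hx => by rw [hψdef]; exact if_neg hx
  have hpM : p ∉ M.E := by rw [hME]; exact fun hc => hc.2 rfl
  have hMEsub : M.E ⊆ M₁.E ∪ M₂.E := by rw [hME]; exact diff_subset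
  have hnotE1 : ∀ x ∈ M.E, x ∉ M₁.E → x ∈ M₂.E :=
    fun x hx h1 => (hMEsub hx).resolve_left h1
  have hE2not1 : ∀ x, x ∈ M₂.E → x ≠ p → x ∉ M₁.E := by
    intro x hx2 hxp hx1
    exact hxp (by have : x ∈ M₁.E ∩ M₂.E := ⟨hx1, hx2⟩; rwa [hE12] at this)
  refine ⟨ι₁ ⊕ ι₂, ψ, fun I hIE => ?_⟩
  constructor
  · -- independent → linearly independent
    intro hI
    by_contra hlin
    obtain ⟨S, hSI, hSne, hS0⟩ := aux_lindep_finset ψ hlin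
    set S₁ : Finset α := S.filter (· ∈ M₁.E) with hS₁def
    set S₂ : Finset α := S.filter (· ∉ M₁.E) with hS₂def
    have hS₁S : ∀ x ∈ S₁, x ∈ S := fun x hx => (Finset.mem_filter.mp hx).1
    have hS₂S : ∀ x ∈ S₂, x ∈ S := fun x hx => (Finset.mem_filter.mp hx).1
    have hSME : ∀ x ∈ S, x ∈ M.E := fun x hx => hIE (hSI hx)
    have hS₁E : ↑S₁ ⊆ M₁.E := fun x hx => (Finset.mem_filter.mp hx).2
    have hS₂E : ↑S₂ ⊆ M₂.E :=
      fun x hx => hnotE1 x (hSME x (hS₂S x hx)) (Finset.mem_filter.mp hx).2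
    have key : ∀ c, ∑ x ∈ S₁, ψ x c + ∑ x ∈ S₂, ψ x c = 0 := by
      intro c
      rw [hS₁def, hS₂def, Finset.sum_filter_add_sum_filter_not S (· ∈ M₁.E) (fun x => ψ x c)]
      calc ∑ x ∈ S, ψ x c = (∑ x ∈ S, ψ x) c := (Finset.sum_apply _ _ _).symm
        _ = 0 := by rw [hS0]; rfl
    set a : ZMod 2 := ∑ x ∈ S₁, φ₁ x i₁ with hadef
    set b : ZMod 2 := ∑ x ∈ S₂, φ₂ x i₂ with hbdef
    have hinl : ∀ i, ∑ x ∈ S₁, φ₁ x i + b * φ₁ p i = 0 := by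
      intro i
      have e1 : ∑ x ∈ S₁, ψ x (Sum.inl i) = ∑ x ∈ S₁, φ₁ x i :=
        Finset.sum_congr rfl fun x hx => by rw [hψ1 x (hS₁E hx)]; rfl
      have e2 : ∑ x ∈ S₂, ψ x (Sum.inl i) = ∑ x ∈ S₂, φ₂ x i₂ * φ₁ p i :=
        Finset.sum_congr rfl fun x hx => by
          rw [hψ2 x (Finset.mem_filter.mp hx).2]; rfl
      have := key (Sum.inl i)
      rwa [e1, e2, ← Finset.sum_mul, ← hbdef] at this
    have hinr : ∀ j, a * φ₂ p j + ∑ x ∈ S₂, φ₂ x j = 0 := by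
      intro j
      have e1 : ∑ x ∈ S₁, ψ x (Sum.inr j) = ∑ x ∈ S₁, φ₁ x i₁ * φ₂ p j :=
        Finset.sum_congr rfl fun x hx => by rw [hψ1 x (hS₁E hx)]; rfl
      have e2 : ∑ x ∈ S₂, ψ x (Sum.inr j) = ∑ x ∈ S₂, φ₂ x j :=
        Finset.sum_congr rfl fun x hx => by
          rw [hψ2 x (Finset.mem_filter.mp hx).2]; rfl
      have := key (Sum.inr j)
      rwa [e1, e2, ← Finset.sum_mul, ← hadef] at this
    have hab : a = b := by
      have := hinl i₁
      rw [hi₁, mul_one, ← hadef] at this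
      exact aux_zmod2_add _ _ this
    have hfin : False := by
      by_cases ha : a = 0
      · have hb : b = 0 := (hab.symm.trans ha)
        have hsum1 : ∑ x ∈ S₁, φ₁ x = 0 := by
          funext i
          rw [Finset.sum_apply]
          have := hinl i
          rwa [hb, zero_mul, add_zero] at this
        have hsum2 : ∑ x ∈ S₂, φ₂ x = 0 := by
          funext j
          rw [Finset.sum_apply]
          have := hinr j
          rwa [ha, zero_mul, zero_add] at this
        obtain ⟨x, hx⟩ := hSne
        by_cases hx1 : x ∈ M₁.E
        · have hS₁ne : S₁.Nonempty := ⟨x, Finset.mem_filter.mpr ⟨hx, hx1⟩⟩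
          obtain ⟨C, hCS, hC⟩ := aux_sum_circuit hφ₁ hS₁E hS₁ne hsum1
          have hpC : p ∉ C := fun hp => hpM (hSME p (hS₁S p (hCS hp)))
          have hCM : Circuit M C := (hcirc C).mpr (Or.inl ⟨hC, hpC⟩)
          have hCI : C ⊆ I := hCS.trans (fun y hy => hSI (hS₁S y hy))
          exact hCM.1.not_indep (hI.subset hCI)
        · have hS₂ne : S₂.Nonempty := ⟨x, Finset.mem_filter.mpr ⟨hx, hx1⟩⟩
          obtain ⟨C, hCS, hC⟩ := aux_sum_circuit hφ₂ hS₂E hS₂ne hsum2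
          have hpC : p ∉ C := fun hp => hpM (hSME p (hS₂S p (hCS hp)))
          have hCM : Circuit M C := (hcirc C).mpr (Or.inr (Or.inl ⟨hC, hpC⟩))
          have hCI : C ⊆ I := hCS.trans (fun y hy => hSI (hS₂S y hy))
          exact hCM.1.not_indep (hI.subset hCI)
      · have ha1 : a = 1 := aux_zmod2_ne a ha
        have hb1 : b = 1 := hab.symm.trans ha1
        have hpS₁ : p ∉ S₁ := fun hp => hpM (hSME p (hS₁S p hp))
        have hpS₂ : p ∉ S₂ := fun hp => hpM (hSME p (hS₂S p hp))
        have hsum1 : ∑ x ∈ insert p S₁, φ₁ x = 0 := by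
          rw [Finset.sum_insert hpS₁]
          funext i
          show φ₁ p i + (∑ x ∈ S₁, φ₁ x) i = 0
          rw [Finset.sum_apply]
          have h' := hinl i
          rw [hb1, one_mul] at h'
          rw [aux_zmod2_add _ _ h']
          exact aux_zmod2_self _
        have hsum2 : ∑ x ∈ insert p S₂, φ₂ x = 0 := by
          rw [Finset.sum_insert hpS₂]
          funext j
          show φ₂ p j + (∑ x ∈ S₂, φ₂ x) j = 0
          rw [Finset.sum_apply]
          have h' := hinr j
          rw [ha1, one_mul] at h'
          rw [← aux_zmod2_add _ _ h']
          exact aux_zmod2_self _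
        have h1E : ↑(insert p S₁) ⊆ M₁.E := by
          rw [Finset.coe_insert]
          exact insert_subset hp₁ hS₁E
        have h2E : ↑(insert p S₂) ⊆ M₂.E := by
          rw [Finset.coe_insert]
          exact insert_subset hp₂ hS₂E
        obtain ⟨C₁, hC₁S, hC₁⟩ :=
          aux_sum_circuit hφ₁ h1E ⟨p, Finset.mem_insert_self _ _⟩ hsum1
        obtain ⟨C₂, hC₂S, hC₂⟩ :=
          aux_sum_circuit hφ₂ h2E ⟨p, Finset.mem_insert_self _ _⟩ hsum2
        have hC₁sub : C₁ \ {p} ⊆ (S₁ : Set α) := by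
          intro y hy
          have := hC₁S hy.1
          rw [Finset.coe_insert] at this
          exact this.resolve_left hy.2
        have hC₂sub : C₂ \ {p} ⊆ (S₂ : Set α) := by
          intro y hy
          have := hC₂S hy.1
          rw [Finset.coe_insert] at this
          exact this.resolve_left hy.2
        by_cases hpC₁ : p ∈ C₁
        · by_cases hpC₂ : p ∈ C₂
          · have hCM : Circuit M ((C₁ \ {p}) ∪ (C₂ \ {p})) :=
              (hcirc _).mpr (Or.inr (Or.inr ⟨C₁, C₂, hC₁, hC₂, hpC₁, hpC₂, rfl⟩))
            have hsub : (C₁ \ {p}) ∪ (C₂ \ {p}) ⊆ I := by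
              refine union_subset ?_ ?_
              · exact hC₁sub.trans (fun y hy => hSI (hS₁S y hy))
              · exact hC₂sub.trans (fun y hy => hSI (hS₂S y hy))
            exact hCM.1.not_indep (hI.subset hsub)
          · have hCM : Circuit M C₂ := (hcirc C₂).mpr (Or.inr (Or.inl ⟨hC₂, hpC₂⟩))
            have hCI : C₂ ⊆ I := by
              intro y hy
              exact hSI (hS₂S y (hC₂sub ⟨hy, fun hyp => hpC₂ (hyp ▸ hy)⟩))
            exact hCM.1.not_indep (hI.subset hCI)
        · have hCM : Circuit M C₁ := (hcirc C₁).mpr (Or.inl ⟨hC₁, hpC₁⟩)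
          have hCI : C₁ ⊆ I := by
            intro y hy
            exact hSI (hS₁S y (hC₁sub ⟨hy, fun hyp => hpC₁ (hyp ▸ hy)⟩))
          exact hCM.1.not_indep (hI.subset hCI)
    exact hfin
  · -- linearly independent → independent
    intro hlin
    by_contra hni
    have hdep : M.Dep I := Matroid.dep_iff.mpr ⟨hni, hIE⟩
    obtain ⟨C, hCI, hC⟩ := aux_dep_circuit M hdep
    have hCME : C ⊆ M.E := hCI.trans hIE
    rcases (hcirc C).mp hC with ⟨hC1, hpC⟩ | ⟨hC2, hpC⟩ | ⟨C₁, C₂, hC₁, hC₂, hp1, hp2, hCeq⟩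
    · obtain ⟨S, hSC, hS0⟩ := aux_circuit_sum hφ₁ hC1
      have hSne : S.Nonempty := by
        obtain ⟨x, hx⟩ := hC1.1.nonempty
        exact ⟨x, by rwa [← Finset.mem_coe, hSC]⟩
      have hmem : ∀ x ∈ S, x ∈ M₁.E := fun x hx =>
        hC1.1.subset_ground (hSC ▸ Finset.mem_coe.mpr hx)
      have hψ0 : ∑ x ∈ S, ψ x = 0 := by
        funext c
        rw [Finset.sum_apply]
        cases c with
        | inl i =>
          have e1 : ∑ x ∈ S, ψ x (Sum.inl i) = ∑ x ∈ S, φ₁ x i :=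
            Finset.sum_congr rfl fun x hx => by rw [hψ1 x (hmem x hx)]; rfl
          rw [e1]
          simpa using congrFun hS0 i
        | inr j =>
          have e1 : ∑ x ∈ S, ψ x (Sum.inr j) = ∑ x ∈ S, φ₁ x i₁ * φ₂ p j :=
            Finset.sum_congr rfl fun x hx => by rw [hψ1 x (hmem x hx)]; rfl
          rw [e1, ← Finset.sum_mul]
          have : ∑ x ∈ S, φ₁ x i₁ = 0 := by simpa using congrFun hS0 i₁
          rw [this, zero_mul]
          rfl
      exact absurd hlin (aux_not_lindep ψ (hSC ▸ hCI) hSne hψ0)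
    · obtain ⟨S, hSC, hS0⟩ := aux_circuit_sum hφ₂ hC2
      have hSne : S.Nonempty := by
        obtain ⟨x, hx⟩ := hC2.1.nonempty
        exact ⟨x, by rwa [← Finset.mem_coe, hSC]⟩
      have hmem : ∀ x ∈ S, x ∉ M₁.E := by
        intro x hx
        have hxC : x ∈ C := hSC ▸ Finset.mem_coe.mpr hx
        exact hE2not1 x (hC2.1.subset_ground hxC) (fun hxp => hpC (hxp ▸ hxC))
      have hψ0 : ∑ x ∈ S, ψ x = 0 := by
        funext c
        rw [Finset.sum_apply]
        cases c with
        | inl i =>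
          have e1 : ∑ x ∈ S, ψ x (Sum.inl i) = ∑ x ∈ S, φ₂ x i₂ * φ₁ p i :=
            Finset.sum_congr rfl fun x hx => by rw [hψ2 x (hmem x hx)]; rfl
          rw [e1, ← Finset.sum_mul]
          have : ∑ x ∈ S, φ₂ x i₂ = 0 := by simpa using congrFun hS0 i₂
          rw [this, zero_mul]
          rfl
        | inr j =>
          have e1 : ∑ x ∈ S, ψ x (Sum.inr j) = ∑ x ∈ S, φ₂ x j :=
            Finset.sum_congr rfl fun x hx => by rw [hψ2 x (hmem x hx)]; rfl
          rw [e1]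
          simpa using congrFun hS0 j
      exact absurd hlin (aux_not_lindep ψ (hSC ▸ hCI) hSne hψ0)
    · obtain ⟨T₁, hT₁C, hT₁0⟩ := aux_circuit_sum hφ₁ hC₁
      obtain ⟨T₂, hT₂C, hT₂0⟩ := aux_circuit_sum hφ₂ hC₂
      have hpT₁ : p ∈ T₁ := by rw [← Finset.mem_coe, hT₁C]; exact hp1
      have hpT₂ : p ∈ T₂ := by rw [← Finset.mem_coe, hT₂C]; exact hp2
      set S : Finset α := (T₁.erase p) ∪ (T₂.erase p) with hSdef
      have hScoe : (S : Set α) = (C₁ \ {p}) ∪ (C₂ \ {p}) := by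
        rw [hSdef, Finset.coe_union, Finset.coe_erase, Finset.coe_erase, hT₁C, hT₂C]
      have hmem1 : ∀ x ∈ T₁.erase p, x ∈ M₁.E := fun x hx =>
        hC₁.1.subset_ground (hT₁C ▸ Finset.mem_coe.mpr (Finset.mem_of_mem_erase hx))
      have hmem2 : ∀ x ∈ T₂.erase p, x ∉ M₁.E := by
        intro x hx
        have hxC : x ∈ C₂ := hT₂C ▸ Finset.mem_coe.mpr (Finset.mem_of_mem_erase hx)
        exact hE2not1 x (hC₂.1.subset_ground hxC) (Finset.mem_erase.mp hx).1
      have hdisj : Disjoint (T₁.erase p) (T₂.erase p) := by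
        rw [Finset.disjoint_left]
        intro x hx1 hx2
        exact hmem2 x hx2 (hmem1 x hx1)
      have hSne : S.Nonempty := by
        obtain ⟨x, hxT, hxp⟩ : ∃ x ∈ T₁, x ≠ p := by
          by_contra hcon
          push_neg at hcon
          have hC1p : C₁ = {p} := by
            refine subset_antisymm (fun x hx => ?_) (singleton_subset_iff.mpr hp1)
            exact hcon x (by rwa [← Finset.mem_coe, hT₁C])
          exact hC₁.1.not_indep (hC1p ▸ hip₁)
        exact ⟨x, Finset.mem_union_left _ (Finset.mem_erase.mpr ⟨hxp, hxT⟩)⟩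
      have hs₁ : ∀ i, ∑ x ∈ T₁.erase p, φ₁ x i = φ₁ p i := by
        intro i
        have heq : φ₁ p i + ∑ x ∈ T₁.erase p, φ₁ x i = 0 := by
          rw [Finset.add_sum_erase T₁ (fun x => φ₁ x i) hpT₁]
          simpa using congrFun hT₁0 i
        exact (aux_zmod2_add _ _ heq).symm
      have hs₂ : ∀ j, ∑ x ∈ T₂.erase p, φ₂ x j = φ₂ p j := by
        intro j
        have heq : φ₂ p j + ∑ x ∈ T₂.erase p, φ₂ x j = 0 := by
          rw [Finset.add_sum_erase T₂ (fun x => φ₂ x j) hpT₂]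
          simpa using congrFun hT₂0 j
        exact (aux_zmod2_add _ _ heq).symm
      have hψ0 : ∑ x ∈ S, ψ x = 0 := by
        funext c
        rw [Finset.sum_apply, hSdef, Finset.sum_union hdisj]
        cases c with
        | inl i =>
          have e1 : ∑ x ∈ T₁.erase p, ψ x (Sum.inl i) = ∑ x ∈ T₁.erase p, φ₁ x i :=
            Finset.sum_congr rfl fun x hx => by rw [hψ1 x (hmem1 x hx)]; rfl
          have e2 : ∑ x ∈ T₂.erase p, ψ x (Sum.inl i) = ∑ x ∈ T₂.erase p, φ₂ x i₂ * φ₁ p i :=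
            Finset.sum_congr rfl fun x hx => by rw [hψ2 x (hmem2 x hx)]; rfl
          rw [e1, e2, hs₁ i, ← Finset.sum_mul, hs₂ i₂, hi₂, one_mul]
          exact aux_zmod2_self _
        | inr j =>
          have e1 : ∑ x ∈ T₁.erase p, ψ x (Sum.inr j) = ∑ x ∈ T₁.erase p, φ₁ x i₁ * φ₂ p j :=
            Finset.sum_congr rfl fun x hx => by rw [hψ1 x (hmem1 x hx)]; rfl
          have e2 : ∑ x ∈ T₂.erase p, ψ x (Sum.inr j) = ∑ x ∈ T₂.erase p, φ₂ x j :=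
            Finset.sum_congr rfl fun x hx => by rw [hψ2 x (hmem2 x hx)]; rfl
          rw [e1, e2, hs₂ j, ← Finset.sum_mul, hs₁ i₁, hi₁, one_mul]
          exact aux_zmod2_self _
      refine absurd hlin (aux_not_lindep ψ ?_ hSne hψ0)
      rw [hScoe, ← hCeq]
      exact hCI

end NearlyBinary
end
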